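/- Let f : Γ × [0,∞) → [0,∞) satisfy, for ρ-almost all y ∈ Γ: f(y, 0) = 0 and α ≤ ∂_s f(y, s) ≤ β with constants 0 < α ≤ β independent of y. Let h(y, r) = ν(y, |r|) r with ν(y, s) = f(y, s)/s. Then for ρ-almost all y, u ∈ V ↦ ⟨A(y) u, v⟩ := ∫_D h(y, curl u) · curl v dx defines an operator A(y) : V → V* that is strongly monotone with constant α and Lipschitz with constant 3β, both uniformly in y; consequently the parametric problem A(y) u(y) = F has a unique solution with ‖u(y)‖_V ≤ C_F ‖J‖₂/α uniformly in y. -/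

import Mathlib

/-!
Pointwise, the radial map `h(r) = (f(|r|)/|r|) r` is `α`-strongly monotone and `3β`-Lipschitz on
`ℝ³`, because its coefficient `f(s)/s` and the slopes of `f` lie in `[α, β]`. Composition with `h`
inherits both properties on `L²`, and conjugating it by the isometry `curl : V → L²` gives an
operator `B` on `V` with `A(y) u v = ⟪B u, v⟫`. Zarantonello's contraction argument makes `B`
bijective, which solves `A(y) u = F` uniquely; strong monotonicity tested against `0` gives the
a priori bound.
-/

open MeasureTheory RealInnerProductSpace Set
open scoped NNReal

section StronglyMonotone

variable {V : Type*} [NormedAddCommGroup V] [InnerProductSpace ℝ V]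

def IsStronglyMonotone (α : ℝ) (B : V → V) : Prop :=
  ∀ u v, α * ‖u - v‖ ^ 2 ≤ ⟪B u - B v, u - v⟫

variable {α : ℝ} {B : V → V}

lemma IsStronglyMonotone.injective (hB : IsStronglyMonotone α B) (hα : 0 < α) :
    Function.Injective B := by
  intro u v huv
  have h := hB u v
  rw [huv, sub_self, inner_zero_left] at h
  have hsq : ‖u - v‖ ^ 2 ≤ 0 := nonpos_of_mul_nonpos_right h hα
  rw [← sub_eq_zero, ← norm_eq_zero]
  exact pow_eq_zero_iff two_ne_zero |>.1 (hsq.antisymm (sq_nonneg _))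

lemma IsStronglyMonotone.norm_le_norm_div (hB : IsStronglyMonotone α B) (hα : 0 < α)
    (hB0 : B 0 = 0) (u : V) : ‖u‖ ≤ ‖B u‖ / α := by
  have h := hB u 0
  rw [hB0, sub_zero, sub_zero] at h
  rw [le_div_iff₀ hα]
  rcases (norm_nonneg u).eq_or_lt with hu | hu
  · rw [← hu, zero_mul]
    positivity
  · nlinarith [real_inner_le_norm (B u) u]

/-- Zarantonello's theorem: for a small step `t`, `u ↦ u - t (B u - w)` is a contraction. -/
lemma IsStronglyMonotone.surjective [CompleteSpace V] {L : ℝ≥0} (hB : IsStronglyMonotone α B)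
    (hα : 0 < α) (hL : LipschitzWith L B) : Function.Surjective B := by
  intro w
  -- `L` may vanish; `L + α` is a positive Lipschitz constant
  set M : ℝ := L + α
  have hM : 0 < M := add_pos_of_nonneg_of_pos L.2 hα
  set t : ℝ := α / M ^ 2
  have ht : 0 < t := by positivity
  set q : ℝ := 1 - α ^ 2 / M ^ 2
  set Φ : V → V := fun u => u - t • (B u - w)
  have hstep : ∀ u v, ‖Φ u - Φ v‖ ^ 2 ≤ q * ‖u - v‖ ^ 2 := by
    intro u v
    have hlip : ‖B u - B v‖ ≤ M * ‖u - v‖ := by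
      rw [← dist_eq_norm, ← dist_eq_norm]
      exact (hL.dist_le_mul u v).trans (by nlinarith [dist_nonneg (x := u) (y := v)])
    have hmono := hB u v
    have hΦ : Φ u - Φ v = (u - v) - t • (B u - B v) := by simp only [Φ]; module
    have hq : q * ‖u - v‖ ^ 2 =
        ‖u - v‖ ^ 2 - 2 * t * (α * ‖u - v‖ ^ 2) + t ^ 2 * (M * ‖u - v‖) ^ 2 := by
      simp only [q, t]; field_simp; ring
    rw [hΦ, norm_sub_sq_real, real_inner_smul_right, norm_smul, Real.norm_of_nonneg ht.le,
      real_inner_comm, hq]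
    have := pow_le_pow_left₀ (norm_nonneg _) hlip 2
    nlinarith
  have hq1 : √q < 1 := (Real.sqrt_lt' one_pos).2 (by
    simp only [q]; linarith [show 0 < α ^ 2 / M ^ 2 by positivity])
  have hΦ : ContractingWith ⟨√q, Real.sqrt_nonneg q⟩ Φ := by
    refine ⟨hq1, LipschitzWith.of_dist_le_mul fun u v => ?_⟩
    change dist (Φ u) (Φ v) ≤ √q * dist u v
    rw [dist_eq_norm, dist_eq_norm, ← Real.sqrt_sq (norm_nonneg (Φ u - Φ v)),
      ← Real.sqrt_sq (norm_nonneg (u - v)), ← Real.sqrt_mul' q (sq_nonneg _)]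
    exact Real.sqrt_le_sqrt (hstep u v)
  have : Nonempty V := ⟨0⟩
  refine ⟨ContractingWith.fixedPoint Φ hΦ, ?_⟩
  have hfix : Φ _ = _ := hΦ.fixedPoint_isFixedPt
  simpa [Φ, ht.ne', sub_eq_zero] using hfix

lemma IsStronglyMonotone.bijective [CompleteSpace V] {L : ℝ≥0} (hB : IsStronglyMonotone α B)
    (hα : 0 < α) (hL : LipschitzWith L B) : Function.Bijective B :=
  ⟨hB.injective hα, hB.surjective hα hL⟩

lemma LipschitzWith.abs_inner_sub_inner_le {K : ℝ≥0} (hB : LipschitzWith K B) (u v w : V) :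
    |⟪B u, w⟫ - ⟪B v, w⟫| ≤ K * ‖u - v‖ * ‖w‖ := by
  rw [← inner_sub_left, ← dist_eq_norm]
  calc _ ≤ ‖B u - B v‖ * ‖w‖ := abs_real_inner_le_norm _ _
    _ ≤ K * dist u v * ‖w‖ := by gcongr; exact dist_eq_norm (B u) (B v) ▸ hB.dist_le_mul u v

end StronglyMonotone

lemma div_mul_cancel_of_map_zero {g : ℝ → ℝ} (hg0 : g 0 = 0) (s : ℝ) : g s / s * s = g s :=
  div_mul_cancel_of_imp fun h => by rw [h, hg0]

lemma abs_div_le_of_lipschitzOnWith {g : ℝ → ℝ} {β : ℝ≥0} (hg0 : g 0 = 0)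
    (hg : LipschitzOnWith β g (Ici 0)) {s : ℝ} (hs : 0 ≤ s) : |g s / s| ≤ β := by
  have h := hg.dist_le_mul s hs 0 self_mem_Ici
  rw [Real.dist_eq, Real.dist_eq, hg0, sub_zero, sub_zero, abs_of_nonneg hs] at h
  rw [abs_div, abs_of_nonneg hs]
  exact div_le_of_le_mul₀ hs β.2 h

lemma monotoneOn_sub_mul_of_le_derivWithin {D : Set ℝ} (hD : Convex ℝ D) {g dg : ℝ → ℝ} {α : ℝ}
    (hg : ∀ s ∈ D, HasDerivWithinAt g (dg s) D s) (hdg : ∀ s ∈ D, α ≤ dg s) :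
    MonotoneOn (fun s => g s - α * s) D := by
  have hd : ∀ s ∈ D, HasDerivWithinAt (fun s => g s - α * s) (dg s - α) D s := fun s hs => by
    simpa using (hg s hs).fun_sub ((hasDerivWithinAt_id s D).const_mul α)
  exact monotoneOn_of_hasDerivWithinAt_nonneg hD (fun s hs => (hd s hs).continuousWithinAt)
    (fun s hs => (hd s (interior_subset hs)).mono interior_subset)
    (fun s hs => sub_nonneg.2 (hdg s (interior_subset hs)))

lemma lipschitzOnWith_of_abs_derivWithin_le {D : Set ℝ} (hD : Convex ℝ D) {g dg : ℝ → ℝ} {β : ℝ}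
    (hg : ∀ s ∈ D, HasDerivWithinAt g (dg s) D s) (hdg : ∀ s ∈ D, |dg s| ≤ β) :
    LipschitzOnWith β.toNNReal g D :=
  hD.lipschitzOnWith_of_nnnorm_hasDerivWithin_le hg fun s hs => by
    rw [← NNReal.coe_le_coe, coe_nnnorm]
    exact (hdg s hs).trans (Real.le_coe_toNNReal β)

section RadialMap

variable {E : Type*} [NormedAddCommGroup E] [NormedSpace ℝ E] {g : ℝ → ℝ}

noncomputable def radialMap (g : ℝ → ℝ) (r : E) : E := (g ‖r‖ / ‖r‖) • r

@[simp]
lemma radialMap_zero : radialMap g (0 : E) = 0 := smul_zero _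

lemma lipschitzWith_radialMap {β : ℝ≥0} (hg0 : g 0 = 0) (hg : LipschitzOnWith β g (Ici 0)) :
    LipschitzWith (3 * β) (radialMap g : E → E) := by
  refine LipschitzWith.of_dist_le_mul fun r r' => ?_
  rw [dist_eq_norm, dist_eq_norm]
  set p := g ‖r‖ / ‖r‖
  set p' := g ‖r'‖ / ‖r'‖
  have hp := abs_div_le_of_lipschitzOnWith hg0 hg (norm_nonneg r)
  have hcoeff : |p - p'| * ‖r'‖ ≤ 2 * β * ‖r - r'‖ := by
    have hgdiff : |g ‖r‖ - g ‖r'‖| ≤ β * |‖r‖ - ‖r'‖| :=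
      hg.dist_le_mul _ (norm_nonneg r) _ (norm_nonneg r')
    have hsplit : (p - p') * ‖r'‖ = p * (‖r'‖ - ‖r‖) + (g ‖r‖ - g ‖r'‖) := by
      rw [sub_mul, div_mul_cancel_of_map_zero hg0 ‖r'‖, ← div_mul_cancel_of_map_zero hg0 ‖r‖]
      ring
    have hnorms : |‖r‖ - ‖r'‖| ≤ ‖r - r'‖ := abs_norm_sub_norm_le r r'
    calc |p - p'| * ‖r'‖ = |p * (‖r'‖ - ‖r‖) + (g ‖r‖ - g ‖r'‖)| := by
          rw [← hsplit, abs_mul, abs_norm]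
      _ ≤ |p * (‖r'‖ - ‖r‖)| + |g ‖r‖ - g ‖r'‖| := abs_add_le _ _
      _ ≤ |p| * |‖r‖ - ‖r'‖| + β * |‖r‖ - ‖r'‖| := by
          rw [abs_mul, abs_sub_comm ‖r'‖]
          gcongr
      _ ≤ 2 * β * ‖r - r'‖ := by nlinarith [abs_nonneg p, abs_nonneg (‖r‖ - ‖r'‖), β.2]
  calc ‖radialMap g r - radialMap g r'‖ = ‖p • (r - r') + (p - p') • r'‖ := by
        unfold radialMap; congr 1; module
    _ ≤ |p| * ‖r - r'‖ + |p - p'| * ‖r'‖ := by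
        refine (norm_add_le _ _).trans_eq ?_
        rw [norm_smul, norm_smul, Real.norm_eq_abs, Real.norm_eq_abs]
    _ ≤ 3 * β * ‖r - r'‖ := by nlinarith [norm_nonneg (r - r')]

end RadialMap

section RadialMapInner

variable {E : Type*} [NormedAddCommGroup E] [InnerProductSpace ℝ E] {g : ℝ → ℝ} {α : ℝ}

lemma sub_mul_sub_nonneg_of_monotoneOn {φ : ℝ → ℝ} (hφ : MonotoneOn φ (Ici 0)) {s t : ℝ}
    (hs : 0 ≤ s) (ht : 0 ≤ t) : 0 ≤ (φ s - φ t) * (s - t) := by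
  rcases le_total t s with hts | hst
  · exact mul_nonneg (sub_nonneg.2 (hφ ht hs hts)) (sub_nonneg.2 hts)
  · exact mul_nonneg_of_nonpos_of_nonpos (sub_nonpos.2 (hφ hs ht hst)) (sub_nonpos.2 hst)

lemma div_norm_sub_mul_nonneg (hg0 : g 0 = 0) (hg : MonotoneOn (fun s => g s - α * s) (Ici 0))
    (r r' : E) : 0 ≤ (g ‖r‖ / ‖r‖ - α) * (‖r‖ * ‖r'‖ - ⟪r, r'⟫) := by
  rcases eq_or_ne r 0 with rfl | hr
  · simp
  have hpos : 0 < ‖r‖ := norm_pos_iff.2 hr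
  have hlow : α * ‖r‖ ≤ g ‖r‖ := by
    simpa [hg0] using hg self_mem_Ici (norm_nonneg r) hpos.le
  exact mul_nonneg (sub_nonneg.2 ((le_div_iff₀ hpos).2 hlow))
    (sub_nonneg.2 (real_inner_le_norm r r'))

lemma isStronglyMonotone_radialMap (hg0 : g 0 = 0)
    (hg : MonotoneOn (fun s => g s - α * s) (Ici 0)) :
    IsStronglyMonotone α (radialMap g : E → E) := by
  intro r r'
  have hslope := sub_mul_sub_nonneg_of_monotoneOn hg (norm_nonneg r) (norm_nonneg r')
  have h := div_norm_sub_mul_nonneg hg0 hg r r'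
  have h' := div_norm_sub_mul_nonneg hg0 hg r' r
  rw [real_inner_comm] at h'
  rw [← div_mul_cancel_of_map_zero hg0 ‖r‖, ← div_mul_cancel_of_map_zero hg0 ‖r'‖] at hslope
  set p := g ‖r‖ / ‖r‖
  set p' := g ‖r'‖ / ‖r'‖
  have hexpand : ⟪radialMap g r - radialMap g r', r - r'⟫ =
      p * ‖r‖ ^ 2 + p' * ‖r'‖ ^ 2 - (p + p') * ⟪r, r'⟫ := by
    simp only [radialMap, inner_sub_left, inner_sub_right, real_inner_smul_left,
      real_inner_self_eq_norm_sq, real_inner_comm r r']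
    ring
  rw [hexpand, norm_sub_sq_real]
  linear_combination h + h' + hslope

end RadialMapInner

section AdjointConj

variable {V W : Type*} [NormedAddCommGroup V] [InnerProductSpace ℝ V] [CompleteSpace V]
  [NormedAddCommGroup W] [InnerProductSpace ℝ W] [CompleteSpace W] {N : W → W}

noncomputable def adjointConj (T : V →ₗᵢ[ℝ] W) (N : W → W) (u : V) : V :=
  ContinuousLinearMap.adjoint T.toContinuousLinearMap (N (T u))

lemma inner_adjointConj (T : V →ₗᵢ[ℝ] W) (N : W → W) (u v : V) :
    ⟪adjointConj T N u, v⟫ = ⟪N (T u), T v⟫ :=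
  ContinuousLinearMap.adjoint_inner_left _ _ _

lemma IsStronglyMonotone.adjointConj {α : ℝ} (hN : IsStronglyMonotone α N) (T : V →ₗᵢ[ℝ] W) :
    IsStronglyMonotone α (adjointConj T N) := by
  intro u v
  rw [inner_sub_left, inner_adjointConj, inner_adjointConj, ← inner_sub_left, ← T.norm_map,
    map_sub]
  exact hN (T u) (T v)

lemma LipschitzWith.adjointConj {K : ℝ≥0} (hN : LipschitzWith K N) (T : V →ₗᵢ[ℝ] W) :
    LipschitzWith K (adjointConj T N) := by
  set Tadj := ContinuousLinearMap.adjoint T.toContinuousLinearMap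
  have hTadj : ‖Tadj‖₊ ≤ 1 := by
    rw [← NNReal.coe_le_coe, coe_nnnorm, LinearIsometryEquiv.norm_map]
    exact T.norm_toContinuousLinearMap_le
  have := Tadj.lipschitz.comp (hN.comp T.lipschitz)
  exact this.weaken (by rw [mul_one]; exact mul_le_of_le_one_left K.2 hTadj)

end AdjointConj

section L2

variable {X E : Type*} [MeasurableSpace X] {μ : Measure X} [NormedAddCommGroup E]
  [InnerProductSpace ℝ E]

lemma inner_toLp_toLp {f g : X → E} (hf : MemLp f 2 μ) (hg : MemLp g 2 μ) :
    ⟪hf.toLp f, hg.toLp g⟫ = ∫ x, ⟪f x, g x⟫ ∂μ := by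
  rw [L2.inner_def]
  refine integral_congr_ae ?_
  filter_upwards [hf.coeFn_toLp, hg.coeFn_toLp] with x hfx hgx
  rw [hfx, hgx]

lemma norm_toLp_sq {f : X → E} (hf : MemLp f 2 μ) : ‖hf.toLp f‖ ^ 2 = ∫ x, ‖f x‖ ^ 2 ∂μ := by
  simp only [← real_inner_self_eq_norm_sq, inner_toLp_toLp]

variable {H : E → E} {K : ℝ≥0}

lemma inner_compLp_toLp (hH : LipschitzWith K H) (hH0 : H 0 = 0) {f g : X → E}
    (hf : MemLp f 2 μ) (hg : MemLp g 2 μ) :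
    ⟪hH.compLp hH0 (hf.toLp f), hg.toLp g⟫ = ∫ x, ⟪H (f x), g x⟫ ∂μ := by
  rw [L2.inner_def]
  refine integral_congr_ae ?_
  filter_upwards [hH.coeFn_compLp hH0 (hf.toLp f), hf.coeFn_toLp, hg.coeFn_toLp]
    with x hHx hfx hgx
  rw [hHx, hgx, Function.comp_apply, hfx]

lemma IsStronglyMonotone.compLp {α : ℝ} (hmono : IsStronglyMonotone α H)
    (hH : LipschitzWith K H) (hH0 : H 0 = 0) :
    IsStronglyMonotone α (hH.compLp hH0 : Lp E 2 μ → Lp E 2 μ) := by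
  intro f f'
  have hnonneg :
      0 ≤ ⟪hH.compLp hH0 f - hH.compLp hH0 f' - α • (f - f'), f - f'⟫ := by
    rw [L2.inner_def]
    refine integral_nonneg_of_ae ?_
    filter_upwards [Lp.coeFn_sub (hH.compLp hH0 f - hH.compLp hH0 f') (α • (f - f')),
      Lp.coeFn_sub (hH.compLp hH0 f) (hH.compLp hH0 f'), Lp.coeFn_smul α (f - f'),
      Lp.coeFn_sub f f', hH.coeFn_compLp hH0 f, hH.coeFn_compLp hH0 f']
      with x h₁ h₂ h₃ h₄ h₅ h₆
    simp only [h₁, h₂, h₃, h₄, h₅, h₆, Pi.sub_apply, Pi.smul_apply, Function.comp_apply,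
      Pi.zero_apply]
    rw [inner_sub_left, real_inner_smul_left, real_inner_self_eq_norm_sq]
    linarith [hmono (f x) (f' x)]
  rw [inner_sub_left, real_inner_smul_left, real_inner_self_eq_norm_sq] at hnonneg
  linarith

end L2

section L2Realization

variable {V X E : Type*} [NormedAddCommGroup V] [InnerProductSpace ℝ V] [MeasurableSpace X]
  {μ : Measure X} [NormedAddCommGroup E] [InnerProductSpace ℝ E]

noncomputable def toL2 (T : V →ₗ[ℝ] (X → E)) (hT : ∀ v, MemLp (T v) 2 μ) :
    V →ₗ[ℝ] Lp E 2 μ where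
  toFun v := (hT v).toLp (T v)
  map_add' u v := (MemLp.toLp_congr _ ((hT u).add (hT v))
    (.of_eq (map_add T u v))).trans (MemLp.toLp_add _ _)
  map_smul' c v := (MemLp.toLp_congr _ ((hT v).const_smul c)
    (.of_eq (map_smul T c v))).trans (MemLp.toLp_const_smul _ _)

lemma toL2_apply (T : V →ₗ[ℝ] (X → E)) (hT : ∀ v, MemLp (T v) 2 μ) (v : V) :
    toL2 T hT v = (hT v).toLp (T v) := rfl

noncomputable def toL2Isometry (T : V →ₗ[ℝ] (X → E)) (hT : ∀ v, MemLp (T v) 2 μ)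
    (hnorm : ∀ v, ‖v‖ ^ 2 = ∫ x, ‖T v x‖ ^ 2 ∂μ) : V →ₗᵢ[ℝ] Lp E 2 μ where
  toLinearMap := toL2 T hT
  norm_map' v := by
    rw [← sq_eq_sq₀ (norm_nonneg _) (norm_nonneg _), hnorm]
    exact norm_toLp_sq (hT v)

lemma exists_inner_eq_integral_inner [CompleteSpace V] (S : V →ₗ[ℝ] (X → E))
    (hS : ∀ v, MemLp (S v) 2 μ) {C : ℝ} (hC : 0 ≤ C)
    (hbound : ∀ v, ∫ x, ‖S v x‖ ^ 2 ∂μ ≤ C ^ 2 * ‖v‖ ^ 2) {J : X → E} (hJ : MemLp J 2 μ) :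
    ∃ w : V, ‖w‖ ≤ C * ‖hJ.toLp J‖ ∧ ∀ v, ⟪w, v⟫ = ∫ x, ⟪J x, S v x⟫ ∂μ := by
  have hSv : ∀ v, ‖toL2 S hS v‖ ≤ C * ‖v‖ := fun v => by
    rw [← pow_le_pow_iff_left₀ (norm_nonneg _) (by positivity) two_ne_zero, mul_pow, toL2_apply,
      norm_toLp_sq]
    exact hbound v
  set φ : StrongDual ℝ V := ((innerₛₗ ℝ (hJ.toLp J)).comp (toL2 S hS)).mkContinuous
    (‖hJ.toLp J‖ * C) fun v => by
      simp only [LinearMap.coe_comp, Function.comp_apply, innerₛₗ_apply_apply, Real.norm_eq_abs]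
      rw [mul_assoc]
      exact (abs_real_inner_le_norm _ _).trans (by gcongr; exact hSv v)
  refine ⟨(InnerProductSpace.toDual ℝ V).symm φ, ?_, fun v => ?_⟩
  · rw [LinearIsometryEquiv.norm_map, mul_comm]
    exact LinearMap.mkContinuous_norm_le _ (by positivity) _
  · rw [InnerProductSpace.toDual_symm_apply, LinearMap.mkContinuous_apply, LinearMap.comp_apply,
      innerₛₗ_apply_apply, toL2_apply, inner_toLp_toLp]

end L2Realization

theorem stmt15_general {V X Γ : Type*} [NormedAddCommGroup V] [InnerProductSpace ℝ V]
    [CompleteSpace V] [MeasurableSpace X] (μ : Measure X)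
    [MeasurableSpace Γ] (P : Measure Γ)
    (curl : V →ₗ[ℝ] (X → EuclideanSpace ℝ (Fin 3)))
    (hnormV : ∀ v : V, ‖v‖ ^ 2 = ∫ x, ‖curl v x‖ ^ 2 ∂μ)
    (hmem : ∀ v : V, MemLp (curl v) 2 μ)
    (emb : V →ₗ[ℝ] (X → EuclideanSpace ℝ (Fin 3)))
    (hembmem : ∀ v : V, MemLp (emb v) 2 μ)
    (f df : Γ → ℝ → ℝ) (α β : ℝ) (hα : 0 < α) (hαβ : α ≤ β)
    (hf : ∀ᵐ y ∂P, f y 0 = 0 ∧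
      (∀ s ∈ Set.Ici (0:ℝ), HasDerivWithinAt (f y) (df y s) (Set.Ici 0) s) ∧
      (∀ s ∈ Set.Ici (0:ℝ), α ≤ df y s ∧ df y s ≤ β))
    (A : Γ → V → V → ℝ)
    (hA : ∀ y : Γ, ∀ u v : V, A y u v =
      ∫ x, ⟪(f y ‖curl u x‖ / ‖curl u x‖) • curl u x, curl v x⟫ ∂μ)
    (J : X → EuclideanSpace ℝ (Fin 3)) (hJmem : MemLp J 2 μ)
    (Jn CF : ℝ) (hJn0 : 0 ≤ Jn) (hJn : Jn ^ 2 = ∫ x, ‖J x‖ ^ 2 ∂μ) (hCF : 0 ≤ CF)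
    (hPF : ∀ v : V, ∫ x, ‖emb v x‖ ^ 2 ∂μ ≤ CF ^ 2 * ‖v‖ ^ 2)
    (F : V → ℝ) (hF : ∀ v : V, F v = ∫ x, ⟪J x, emb v x⟫ ∂μ) :
    ∀ᵐ y ∂P,
      (∀ u v : V, α * ‖u - v‖ ^ 2 ≤ A y u (u - v) - A y v (u - v)) ∧
      (∀ u v w : V, |A y u w - A y v w| ≤ 3 * β * ‖u - v‖ * ‖w‖) ∧
      (∃! uy : V, ∀ v : V, A y uy v = F v) ∧
      (∀ uy : V, (∀ v : V, A y uy v = F v) → ‖uy‖ ≤ CF * Jn / α) := by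
  have hβ : 0 ≤ β := hα.le.trans hαβ
  set T := toL2Isometry curl hmem hnormV
  obtain ⟨w, hw, hFw⟩ := exists_inner_eq_integral_inner emb hembmem hCF hPF hJmem
  rw [(sq_eq_sq₀ (norm_nonneg (hJmem.toLp J)) hJn0).1 (by rw [norm_toLp_sq, hJn])] at hw
  filter_upwards [hf] with y ⟨hg0, hderiv, hbnd⟩
  have hlip : LipschitzOnWith β.toNNReal (f y) (Ici 0) :=
    lipschitzOnWith_of_abs_derivWithin_le (convex_Ici 0) hderiv fun s hs =>
      abs_le.2 ⟨by linarith [hbnd s hs], (hbnd s hs).2⟩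
  have hmono : MonotoneOn (fun s => f y s - α * s) (Ici 0) :=
    monotoneOn_sub_mul_of_le_derivWithin (convex_Ici 0) hderiv fun s hs => (hbnd s hs).1
  have hH := lipschitzWith_radialMap (E := EuclideanSpace ℝ (Fin 3)) hg0 hlip
  set B := adjointConj T (hH.compLp radialMap_zero (μ := μ))
  have hAB : ∀ u v, A y u v = ⟪B u, v⟫ := fun u v => by
    rw [hA, inner_adjointConj]
    exact (inner_compLp_toLp hH radialMap_zero (hmem u) (hmem v)).symm
  have hB : IsStronglyMonotone α B :=
    ((isStronglyMonotone_radialMap hg0 hmono).compLp hH radialMap_zero).adjointConj T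
  have hBlip : LipschitzWith (3 * β.toNNReal) B :=
    (hH.lipschitzWith_compLp radialMap_zero).adjointConj T
  have hsol : ∀ u, (∀ v, A y u v = F v) ↔ B u = w := fun u => by
    simp only [hAB, hF, ← hFw]
    exact ⟨ext_inner_right ℝ, fun h v => by rw [h]⟩
  refine ⟨fun u v => ?_, fun u v z => ?_, ?_, fun u hu => ?_⟩
  · simpa only [hAB, ← inner_sub_left] using hB u v
  · simpa only [hAB, NNReal.coe_mul, NNReal.coe_ofNat, Real.coe_toNNReal β hβ]
      using hBlip.abs_inner_sub_inner_le u v z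
  · simpa only [hsol] using (hB.bijective hα hBlip).existsUnique w
  · have hB0 : B 0 = 0 := by simp [B, adjointConj]
    calc ‖u‖ ≤ ‖B u‖ / α := hB.norm_le_norm_div hα hB0 u
      _ ≤ CF * Jn / α := by rw [(hsol u).1 hu]; gcongr

/-- uniform well-posedness of the parametric curl–curl problem. For ρ-almost
all `y`, the operator `⟨A(y)u, v⟩ = ∫_D h(y, curl u)·curl v dx` with
`h(y,r) = (f(y,|r|)/|r|) r` is strongly monotone with constant `α` and Lipschitz with
constant `3β`, and the problem `A(y)u = F`, `F(v) = (J, v)_{L²}`, has a unique solution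
with `‖u(y)‖_V ≤ C_F ‖J‖₂ / α`. -/
theorem stmt15 {V X Γ : Type*} [NormedAddCommGroup V] [InnerProductSpace ℝ V]
    [CompleteSpace V] [MeasurableSpace X] (μ : Measure X)
    [MeasurableSpace Γ] (P : Measure Γ) [IsProbabilityMeasure P]
    (curl : V →ₗ[ℝ] (X → EuclideanSpace ℝ (Fin 3)))
    (hnormV : ∀ v : V, ‖v‖ ^ 2 = ∫ x, ‖curl v x‖ ^ 2 ∂μ)
    (hmem : ∀ v : V, MemLp (curl v) 2 μ)
    (emb : V →ₗ[ℝ] (X → EuclideanSpace ℝ (Fin 3)))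
    (hembmem : ∀ v : V, MemLp (emb v) 2 μ)
    (f df : Γ → ℝ → ℝ) (α β : ℝ) (hα : 0 < α) (hαβ : α ≤ β)
    (hf : ∀ᵐ y ∂P, f y 0 = 0 ∧
      (∀ s ∈ Set.Ici (0:ℝ), HasDerivWithinAt (f y) (df y s) (Set.Ici 0) s) ∧
      (∀ s ∈ Set.Ici (0:ℝ), α ≤ df y s ∧ df y s ≤ β))
    (A : Γ → V → V → ℝ)
    (hA : ∀ y : Γ, ∀ u v : V, A y u v =
      ∫ x, ⟪(f y ‖curl u x‖ / ‖curl u x‖) • curl u x, curl v x⟫ ∂μ)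
    (J : X → EuclideanSpace ℝ (Fin 3)) (hJmem : MemLp J 2 μ)
    (Jn CF : ℝ) (hJn0 : 0 ≤ Jn) (hJn : Jn ^ 2 = ∫ x, ‖J x‖ ^ 2 ∂μ) (hCF : 0 ≤ CF)
    (hPF : ∀ v : V, ∫ x, ‖emb v x‖ ^ 2 ∂μ ≤ CF ^ 2 * ‖v‖ ^ 2)
    (F : V → ℝ) (hF : ∀ v : V, F v = ∫ x, ⟪J x, emb v x⟫ ∂μ) :
    ∀ᵐ y ∂P,
      (∀ u v : V, α * ‖u - v‖ ^ 2 ≤ A y u (u - v) - A y v (u - v)) ∧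
      (∀ u v w : V, |A y u w - A y v w| ≤ 3 * β * ‖u - v‖ * ‖w‖) ∧
      (∃! uy : V, ∀ v : V, A y uy v = F v) ∧
      (∀ uy : V, (∀ v : V, A y uy v = F v) → ‖uy‖ ≤ CF * Jn / α) :=
  stmt15_general μ P curl hnormV hmem emb hembmem f df α β hα hαβ hf A hA J hJmem Jn CF hJn0 hJn hCF
    hPF F hF
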